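/- arXiv:2506.14446 — 5 statements merged into one kernel-verified Lean document; each statement's English description precedes it below -/
import Mathlib

section
/- Let k, r be positive integers, ε > 0, and f : [-ε, ε] → ℝ a C¹ function with ‖f - id‖_{C¹} < η, where 0 < η ≤ 1/(kr)². Suppose c ∈ [-ε, 0] satisfies f(c) > c and all iterates f^{rj}(c) for 0 ≤ j ≤ k remain in [-ε, ε]. Then the sequence x_j = f^{rj}(c), 0 ≤ j ≤ k, is a krη-quasi-arithmetic progression: x₁ > x₀ and (1 - krη)(x₁ - x₀) < x_j - x_{j-1} < (1 + krη)(x₁ - x₀) for all 1 ≤ j ≤ k. -/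
lemma pow_one_add_le_aux (η : ℝ) (hη : 0 ≤ η) :
    ∀ m : ℕ, (m : ℝ) * η ≤ 1 → (1 + η) ^ m ≤ 1 + m * η + (m * η) ^ 2 := by
  intro m
  induction m with
  | zero => simp
  | succ m ih =>
    intro h
    push_cast at h ⊢
    have hm : (m : ℝ) * η ≤ 1 := by nlinarith
    have hih := ih hm
    have hpos : (0:ℝ) ≤ 1 + η := by linarith
    rw [pow_succ]
    have h2 : (1 + η) ^ m * (1 + η) ≤ (1 + (m:ℝ) * η + ((m:ℝ) * η) ^ 2) * (1 + η) :=
      mul_le_mul_of_nonneg_right hih hpos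
    have hm0 : (0:ℝ) ≤ (m:ℝ) := Nat.cast_nonneg m
    nlinarith [mul_le_mul_of_nonneg_left hm hm0, mul_nonneg hm0 hη, sq_nonneg ((m:ℝ)*η)]

lemma quasi_key (ε η : ℝ) (hη0 : 0 < η) (hη1 : η ≤ 1)
    (f f' : ℝ → ℝ)
    (hderiv : ∀ x ∈ Set.Icc (-ε) ε, HasDerivAt f (f' x) x)
    (hC1 : ∀ x ∈ Set.Icc (-ε) ε, |f' x - 1| < η) :
    ∀ (m : ℕ) (a b : ℝ), a < b →
      (∀ i ≤ m, f^[i] a ∈ Set.Icc (-ε) ε) →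
      (∀ i ≤ m, f^[i] b ∈ Set.Icc (-ε) ε) →
      f^[m] a < f^[m] b ∧
      (1 - η) ^ m * (b - a) ≤ f^[m] b - f^[m] a ∧
      f^[m] b - f^[m] a ≤ (1 + η) ^ m * (b - a) := by
  intro m
  induction m with
  | zero =>
    intro a b hab _ _
    simp only [Function.iterate_zero_apply, pow_zero, one_mul]
    exact ⟨hab, le_refl _, le_refl _⟩
  | succ m ih =>
    intro a b hab ha hb
    obtain ⟨h1, h2, h3⟩ := ih a b hab
      (fun i hi => ha i (le_trans hi (Nat.le_succ m)))
      (fun i hi => hb i (le_trans hi (Nat.le_succ m)))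
    set A := f^[m] a with hAdef
    set B := f^[m] b with hBdef
    have hA : A ∈ Set.Icc (-ε) ε := ha m (Nat.le_succ m)
    have hB : B ∈ Set.Icc (-ε) ε := hb m (Nat.le_succ m)
    have hsub : Set.Icc A B ⊆ Set.Icc (-ε) ε :=
      fun x hx => ⟨le_trans hA.1 hx.1, le_trans hx.2 hB.2⟩
    have hcont : ContinuousOn f (Set.Icc A B) :=
      fun x hx => ((hderiv x (hsub hx)).continuousAt).continuousWithinAt
    obtain ⟨ξ, hξ, hslope⟩ := exists_hasDerivAt_eq_slope f f' h1 hcont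
      (fun x hx => hderiv x (hsub (Set.Ioo_subset_Icc_self hx)))
    have hξI : ξ ∈ Set.Icc (-ε) ε := hsub (Set.Ioo_subset_Icc_self hξ)
    have hd := hC1 ξ hξI
    rw [abs_lt] at hd
    have hBA : 0 < B - A := sub_pos.2 h1
    have heq : f B - f A = f' ξ * (B - A) := by
      rw [hslope]
      field_simp
    have h1η : (0:ℝ) ≤ 1 - η := by linarith
    have low : (1 - η) * (B - A) ≤ f B - f A := by
      rw [heq]; nlinarith [hd.1]
    have high : f B - f A ≤ (1 + η) * (B - A) := by
      rw [heq]; nlinarith [hd.2]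
    have hfAB : f A < f B := by nlinarith [hd.1]
    rw [Function.iterate_succ_apply', Function.iterate_succ_apply', ← hAdef, ← hBdef]
    refine ⟨hfAB, ?_, ?_⟩
    · rw [pow_succ]
      nlinarith [mul_le_mul_of_nonneg_right h2 h1η]
    · rw [pow_succ]
      nlinarith [mul_le_mul_of_nonneg_right h3 (show (0:ℝ) ≤ 1 + η by linarith)]

set_option maxHeartbeats 1000000 in
theorem stmt3 (k r : ℕ) (hk : 0 < k) (hr : 0 < r) (ε η : ℝ) (hε : 0 < ε)
    (hη0 : 0 < η) (hη : η ≤ 1 / ((k : ℝ) * r) ^ 2)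
    (f f' : ℝ → ℝ)
    (hderiv : ∀ x ∈ Set.Icc (-ε) ε, HasDerivAt f (f' x) x)
    (hC0 : ∀ x ∈ Set.Icc (-ε) ε, |f x - x| < η)
    (hC1 : ∀ x ∈ Set.Icc (-ε) ε, |f' x - 1| < η)
    (c : ℝ) (hc : c ∈ Set.Icc (-ε) 0) (hfc : f c > c)
    (hiter : ∀ j ≤ k * r, f^[j] c ∈ Set.Icc (-ε) ε) :
    f^[r * 1] c > f^[r * 0] c ∧
      ∀ j, 1 ≤ j → j ≤ k →
        (1 - (k : ℝ) * r * η) * (f^[r * 1] c - f^[r * 0] c) <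
            f^[r * j] c - f^[r * (j - 1)] c ∧
          f^[r * j] c - f^[r * (j - 1)] c <
            (1 + (k : ℝ) * r * η) * (f^[r * 1] c - f^[r * 0] c) := by
  have hkR : (1:ℝ) ≤ (k:ℝ) := by exact_mod_cast hk
  have hrR : (1:ℝ) ≤ (r:ℝ) := by exact_mod_cast hr
  set X : ℝ := (k:ℝ) * r with hXdef
  have hX1 : (1:ℝ) ≤ X := by nlinarith
  have hX0 : (0:ℝ) < X := by linarith
  have hX2 : (0:ℝ) < X ^ 2 := by positivity
  have hηN : η * X ^ 2 ≤ 1 := by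
    rw [le_div_iff₀ hX2] at hη; linarith
  have hη1 : η ≤ 1 := by nlinarith
  have key := quasi_key ε η hη0 hη1 f f' hderiv hC1
  -- orbit is increasing step by step
  have hstep : ∀ i, i + 1 ≤ k * r → f^[i] c < f^[i + 1] c := by
    intro i hi
    have h := key i c (f c) hfc
      (fun p hp => hiter p (by omega))
      (fun p hp => by
        rw [← Function.iterate_succ_apply]
        exact hiter (p + 1) (by omega))
    rw [← Function.iterate_succ_apply] at h
    exact h.1
  have hchain : ∀ i, 1 ≤ i → i ≤ k * r → c < f^[i] c := by
    intro i
    induction i with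
    | zero => omega
    | succ i ih =>
      intro _ hi
      rcases Nat.eq_zero_or_pos i with h0 | h1
      · subst h0
        simpa using hfc
      · exact lt_trans (ih h1 (by omega)) (hstep i (by omega))
  have hrkr : r ≤ k * r := Nat.le_mul_of_pos_left r hk
  have hcr : c < f^[r] c := hchain r hr hrkr
  simp only [Nat.mul_one, Nat.mul_zero, Function.iterate_zero_apply]
  refine ⟨hcr, ?_⟩
  intro j hj1 hjk
  set m := r * (j - 1) with hmdef
  have hj' : m + r = r * j := by
    rw [hmdef, ← Nat.mul_succ]
    congr 1
    omega
  have hmr : m + r ≤ k * r := by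
    rw [hj', mul_comm]
    exact Nat.mul_le_mul_right r hjk
  obtain ⟨hlt, hlow, hhigh⟩ := key m c (f^[r] c) hcr
    (fun i hi => hiter i (by omega))
    (fun i hi => by
      rw [← Function.iterate_add_apply]
      exact hiter (i + r) (by omega))
  rw [← Function.iterate_add_apply, hj'] at hlow hhigh
  have hD : 0 < f^[r] c - c := sub_pos.2 hcr
  set D := f^[r] c - c with hDdef
  have hm1 : (m:ℝ) + 1 ≤ X := by
    have : m + 1 ≤ k * r := by omega
    have h2 : ((m:ℕ):ℝ) + 1 ≤ ((k * r : ℕ):ℝ) := by exact_mod_cast this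
    push_cast at h2
    linarith
  have hm0 : (0:ℝ) ≤ (m:ℝ) := Nat.cast_nonneg m
  constructor
  · -- lower bound
    have hber : 1 - (m:ℝ) * η ≤ (1 - η) ^ m := by
      have h := one_add_mul_le_pow (a := -η) (by linarith) m
      rw [show (1:ℝ) + -η = 1 - η from by ring] at h
      linarith
    have h1 : (1 - (m:ℝ) * η) * D ≤ (1 - η) ^ m * D :=
      mul_le_mul_of_nonneg_right hber hD.le
    have h2 : (1 - X * η) * D < (1 - (m:ℝ) * η) * D := by
      have : (m:ℝ) * η < X * η := by nlinarith
      nlinarith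
    calc (1 - X * η) * D < (1 - (m:ℝ) * η) * D := h2
      _ ≤ (1 - η) ^ m * D := h1
      _ ≤ f^[r * j] c - f^[m] c := hlow
  · -- upper bound
    have hmη1 : (m:ℝ) * η ≤ 1 := by nlinarith
    have hp := pow_one_add_le_aux η hη0.le m hmη1
    have h1 : (1 + η) ^ m * D ≤ (1 + (m:ℝ) * η + ((m:ℝ) * η) ^ 2) * D :=
      mul_le_mul_of_nonneg_right hp hD.le
    have h2 : (1 + (m:ℝ) * η + ((m:ℝ) * η) ^ 2) * D < (1 + X * η) * D := by
      have ha : (m:ℝ) ≤ X - 1 := by linarith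
      have hb : (m:ℝ) ^ 2 ≤ (X - 1) ^ 2 := by nlinarith
      have hc : (X - 1) ^ 2 ≤ X ^ 2 - 1 := by nlinarith
      have hd2 : (m:ℝ) ^ 2 * η ≤ (X ^ 2 - 1) * η :=
        mul_le_mul_of_nonneg_right (le_trans hb hc) hη0.le
      have he : (X ^ 2 - 1) * η ≤ 1 - η := by nlinarith
      have hf : (m:ℝ) ^ 2 * η < 1 := by linarith
      have hg : (m:ℝ) ^ 2 * η * η < 1 * η :=
        mul_lt_mul_of_pos_right hf hη0
      have hkey : (m:ℝ) * η + ((m:ℝ) * η) ^ 2 < X * η := by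
        have h3 : (m:ℝ) * η ≤ (X - 1) * η := mul_le_mul_of_nonneg_right ha hη0.le
        have h4 : ((m:ℝ) * η) ^ 2 = (m:ℝ) ^ 2 * η * η := by ring
        rw [h4]
        nlinarith
      nlinarith
    calc f^[r * j] c - f^[m] c ≤ (1 + η) ^ m * D := hhigh
      _ ≤ (1 + (m:ℝ) * η + ((m:ℝ) * η) ^ 2) * D := h1
      _ < (1 + X * η) * D := h2
end

section
/- Let ε ∈ (0,1), k ≥ 2, and let x₀ < x₁ < ⋯ < x_k be an increasing ε-quasi-arithmetic progression. Let P be a real polynomial of degree at most k with |P(x_j)| ≤ C for all 0 ≤ j ≤ k. Then for all x ∈ [x₀, x_k], |P(x)| ≤ C · (2(1+ε)/(1-ε))^k. -/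
open Finset

lemma fact_mul_fact_le (k m : ℕ) (h : m + 1 ≤ k) :
    (m+1).factorial * (k - m).factorial ≤ k.factorial := by
  induction k with
  | zero => omega
  | succ n ih =>
    rcases eq_or_lt_of_le h with h1 | h1
    · have : m = n := by omega
      subst this
      simp [Nat.sub_self]
    · have hm : m + 1 ≤ n := by omega
      have e : n + 1 - m = (n - m) + 1 := by omega
      rw [e, Nat.factorial_succ (n - m), Nat.factorial_succ n]
      calc (m+1).factorial * ((n - m + 1) * (n-m).factorial)
          = (n - m + 1) * ((m+1).factorial * (n-m).factorial) := by ring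
        _ ≤ (n + 1) * Nat.factorial n := Nat.mul_le_mul (by omega) (ih hm)

lemma prod_range_sub' (i : ℕ) : ∏ j ∈ range i, (i - j) = i.factorial := by
  rw [← Finset.prod_range_add_one_eq_factorial, ← Finset.prod_range_reflect (fun j => j + 1) i]
  exact Finset.prod_congr rfl fun j hj => by
    simp only [mem_range] at hj; omega

lemma erase_range_split {k i : ℕ} (hi : i ≤ k) :
    (range (k+1)).erase i = range i ∪ Ico (i+1) (k+1) := by
  ext j
  simp only [mem_erase, mem_range, mem_union, mem_Ico]
  omega

lemma prod_dist (k i : ℕ) (hi : i ≤ k) :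
    ∏ j ∈ (range (k+1)).erase i, Nat.dist i j = i.factorial * (k - i).factorial := by
  rw [erase_range_split hi, Finset.prod_union (by simp [Finset.disjoint_left]; omega)]
  congr 1
  · rw [← prod_range_sub' i]
    exact Finset.prod_congr rfl fun j hj => by
      simp only [mem_range] at hj
      simp [Nat.dist]; omega
  · rw [Finset.prod_Ico_eq_prod_range]
    have e : k + 1 - (i + 1) = k - i := by omega
    rw [e, ← Finset.prod_range_add_one_eq_factorial]
    exact Finset.prod_congr rfl fun j hj => by simp [Nat.dist]; omega

theorem stmt5 (k : ℕ) (hk : 2 ≤ k) (ε : ℝ) (hε0 : 0 < ε) (hε1 : ε < 1)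
    (x : ℕ → ℝ) (hx01 : x 0 < x 1)
    (hqap : ∀ j, 1 ≤ j → j ≤ k →
      (1 - ε) * (x 1 - x 0) < x j - x (j - 1) ∧
        x j - x (j - 1) < (1 + ε) * (x 1 - x 0))
    (P : Polynomial ℝ) (hdeg : P.degree ≤ k)
    (C : ℝ) (hC : ∀ j ≤ k, |P.eval (x j)| ≤ C) :
    ∀ t ∈ Set.Icc (x 0) (x k), |P.eval t| ≤ C * (2 * (1 + ε) / (1 - ε)) ^ k := by
  classical
  intro t ht
  set d := x 1 - x 0 with hd
  have hd0 : 0 < d := sub_pos.mpr hx01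
  have hB0 : 0 < (1 - ε) * d := mul_pos (by linarith) hd0
  have hA0 : 0 < (1 + ε) * d := mul_pos (by linarith) hd0
  -- gap bounds
  have gap : ∀ n, n ≤ k → ∀ i ≤ n,
      ((n - i : ℕ) : ℝ) * ((1-ε)*d) ≤ x n - x i ∧
      x n - x i ≤ ((n - i : ℕ) : ℝ) * ((1+ε)*d) := by
    intro n
    induction n with
    | zero => intro _ i hi; interval_cases i; simp
    | succ n ih =>
      intro hnk i hin
      rcases Nat.lt_or_ge i (n+1) with h1 | h1
      · have hin' : i ≤ n := by omega
        obtain ⟨l1, u1⟩ := ih (by omega) i hin'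
        obtain ⟨l2, u2⟩ := hqap (n+1) (by omega) hnk
        simp only [Nat.add_sub_cancel] at l2 u2
        have e : ((n + 1 - i : ℕ) : ℝ) = ((n - i : ℕ) : ℝ) + 1 := by
          have : n + 1 - i = (n - i) + 1 := by omega
          rw [this]; push_cast; ring
        rw [e]
        constructor <;> nlinarith
      · have : i = n + 1 := by omega
        subst this; simp
  have mono : ∀ i j, i < j → j ≤ k → x i < x j := by
    intro i j hij hjk
    have h1 := (gap j hjk i (le_of_lt hij)).1
    have h2 : (1 : ℝ) ≤ ((j - i : ℕ) : ℝ) := by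
      exact_mod_cast Nat.one_le_iff_ne_zero.mpr (by omega)
    nlinarith
  have hinj : Set.InjOn x (range (k+1)) := by
    intro i hi j hj hxy
    simp only [coe_range, Set.mem_Iio] at hi hj
    by_contra hne
    rcases Nat.lt_or_ge i j with h | h
    · exact absurd hxy (ne_of_lt (mono i j h (by omega)))
    · exact absurd hxy.symm (ne_of_lt (mono j i (by omega) (by omega)))
  -- the interval index m
  set m := Nat.findGreatest (fun j => x j ≤ t) (k-1) with hm
  have hmk : m ≤ k - 1 := Nat.findGreatest_le _
  have hxm : x m ≤ t := by
    have := Nat.findGreatest_spec (P := fun j => x j ≤ t) (Nat.zero_le (k-1)) ht.1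
    simpa [← hm] using this
  have hxm1 : t ≤ x (m+1) := by
    rcases Nat.lt_or_ge m (k-1) with h | h
    · have h2 := Nat.findGreatest_is_greatest (P := fun j => x j ≤ t) (n := k-1)
        (k := m+1) (by omega) (by omega)
      exact le_of_not_ge h2
    · have : m = k - 1 := by omega
      rw [this]
      have : k - 1 + 1 = k := by omega
      rw [this]; exact ht.2
  have hmk' : m + 1 ≤ k := by omega
  -- coefficient function
  set c : ℕ → ℕ := fun j => if j ≤ m then m + 1 - j else j - m with hc
  have hc1 : ∀ j, 1 ≤ c j := by
    intro j; simp only [hc]; split <;> omega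
  -- numerator bound
  have num : ∀ j ≤ k, |t - x j| ≤ (c j : ℝ) * ((1+ε)*d) := by
    intro j hj
    by_cases hjm : j ≤ m
    · have h1 : x j ≤ t := le_trans (by
        rcases eq_or_lt_of_le hjm with h | h
        · rw [h]
        · exact le_of_lt (mono j m h (by omega))) hxm
      rw [abs_of_nonneg (by linarith)]
      have h2 := (gap (m+1) (by omega) j (by omega)).2
      have e : (c j : ℝ) = ((m + 1 - j : ℕ) : ℝ) := by simp [hc, hjm]
      rw [e]
      linarith
    · have hjm' : m + 1 ≤ j := by omega
      have h1 : t ≤ x j := le_trans hxm1 (by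
        rcases eq_or_lt_of_le hjm' with h | h
        · rw [h]
        · exact le_of_lt (mono (m+1) j h hj))
      rw [abs_of_nonpos (by linarith), neg_sub]
      have h2 := (gap j hj m (by omega)).2
      have e : (c j : ℝ) = ((j - m : ℕ) : ℝ) := by simp [hc, hjm]
      rw [e]
      linarith
  -- denominator bound
  have den : ∀ i ≤ k, ∀ j ≤ k, i ≠ j →
      (Nat.dist i j : ℝ) * ((1-ε)*d) ≤ |x i - x j| := by
    intro i hi j hj hne
    rcases Nat.lt_or_ge i j with h | h
    · have h1 := (gap j hj i (le_of_lt h)).1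
      rw [Nat.dist_eq_sub_of_le (le_of_lt h),
        abs_of_nonpos (le_of_lt (sub_neg.mpr (mono i j h hj))), neg_sub]
      exact h1
    · have h' : j < i := by omega
      have h1 := (gap i hi j (le_of_lt h')).1
      rw [Nat.dist_eq_sub_of_le_right (le_of_lt h'),
        abs_of_nonneg (le_of_lt (sub_pos.mpr (mono j i h' hi)))]
      exact h1
  -- product of c over erase is at most k!
  have prodC : ∀ i ≤ k, ∏ j ∈ (range (k+1)).erase i, c j ≤ k.factorial := by
    intro i hi
    have h1 : (∏ j ∈ (range (k+1)).erase i, c j) ≤ ∏ j ∈ range (k+1), c j := by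
      rw [← Finset.prod_erase_mul (range (k+1)) c (mem_range.mpr (show i < k+1 by omega))]
      exact Nat.le_mul_of_pos_right _ (hc1 i)
    have h2 : ∏ j ∈ range (k+1), c j = (m+1).factorial * (k-m).factorial := by
      rw [← Finset.prod_range_mul_prod_Ico c (show m+1 ≤ k+1 by omega)]
      congr 1
      · rw [← prod_range_sub' (m+1)]
        exact Finset.prod_congr rfl fun j hj => by
          simp only [mem_range] at hj
          simp only [hc]; rw [if_pos (by omega)]
      · rw [Finset.prod_Ico_eq_prod_range]
        have e : k + 1 - (m + 1) = k - m := by omega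
        rw [e, ← Finset.prod_range_add_one_eq_factorial]
        exact Finset.prod_congr rfl fun j hj => by
          simp only [mem_range] at hj
          simp only [hc]; rw [if_neg (by omega)]; omega
    calc (∏ j ∈ (range (k+1)).erase i, c j) ≤ (m+1).factorial * (k-m).factorial := h2 ▸ h1
      _ ≤ k.factorial := fact_mul_fact_le k m hmk'
  -- basis polynomial bound
  set r : ℝ := (1+ε)/(1-ε) with hr
  have hr0 : 0 < r := div_pos (by linarith) (by linarith)
  have basis_bd : ∀ i ∈ range (k+1),
      |(Lagrange.basis (range (k+1)) x i).eval t| ≤ (k.choose i : ℝ) * r ^ k := by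
    intro i hi
    rw [mem_range] at hi
    have hik : i ≤ k := by omega
    have hE : ((range (k+1)).erase i).card = k := by
      rw [card_erase_of_mem (mem_range.mpr (show i < k + 1 by omega)), card_range]
      omega
    rw [Lagrange.basis, Polynomial.eval_prod, Finset.abs_prod]
    have step1 : ∀ j ∈ (range (k+1)).erase i,
        |(Lagrange.basisDivisor (x i) (x j)).eval t|
          ≤ ((c j : ℝ) * ((1+ε)*d)) / ((Nat.dist i j : ℝ) * ((1-ε)*d)) := by
      intro j hj
      rw [mem_erase, mem_range] at hj
      obtain ⟨hne, hjk⟩ := hj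
      have hjk' : j ≤ k := by omega
      have e1 : (Lagrange.basisDivisor (x i) (x j)).eval t = (x i - x j)⁻¹ * (t - x j) := by
        simp [Lagrange.basisDivisor]
      rw [e1, abs_mul, abs_inv, inv_mul_eq_div]
      have hdist : (1 : ℝ) ≤ (Nat.dist i j : ℝ) := by
        have : Nat.dist i j ≠ 0 := fun h0 => (hne.symm) (Nat.eq_of_dist_eq_zero h0)
        exact_mod_cast Nat.one_le_iff_ne_zero.mpr this
      refine div_le_div₀ (by positivity) (num j hjk') ?_ (den i hik j hjk' (hne.symm))
      exact mul_pos (by linarith) hB0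
    calc (∏ j ∈ (range (k+1)).erase i, |(Lagrange.basisDivisor (x i) (x j)).eval t|)
        ≤ ∏ j ∈ (range (k+1)).erase i,
            ((c j : ℝ) * ((1+ε)*d)) / ((Nat.dist i j : ℝ) * ((1-ε)*d)) :=
          Finset.prod_le_prod (fun j _ => abs_nonneg _) step1
      _ = ((∏ j ∈ (range (k+1)).erase i, c j : ℕ) : ℝ) * ((1+ε)*d)^k /
            (((i.factorial * (k-i).factorial : ℕ) : ℝ) * ((1-ε)*d)^k) := by
          have hnum : (∏ j ∈ (range (k+1)).erase i, ((c j : ℝ) * ((1+ε)*d)))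
              = ((∏ j ∈ (range (k+1)).erase i, c j : ℕ) : ℝ) * ((1+ε)*d)^k := by
            rw [Finset.prod_mul_distrib, Finset.prod_const, hE, ← Nat.cast_prod]
          have hden : (∏ j ∈ (range (k+1)).erase i, ((Nat.dist i j : ℝ) * ((1-ε)*d)))
              = ((i.factorial * (k-i).factorial : ℕ) : ℝ) * ((1-ε)*d)^k := by
            rw [Finset.prod_mul_distrib, Finset.prod_const, hE, ← Nat.cast_prod,
              prod_dist k i hik]
          rw [Finset.prod_div_distrib, hnum, hden]
      _ ≤ ((k.factorial : ℕ) : ℝ) * ((1+ε)*d)^k /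
            (((i.factorial * (k-i).factorial : ℕ) : ℝ) * ((1-ε)*d)^k) := by
          have h1 : ((∏ j ∈ (range (k+1)).erase i, c j : ℕ) : ℝ) ≤ ((k.factorial : ℕ) : ℝ) := by
            exact_mod_cast prodC i hik
          gcongr
      _ = (k.choose i : ℝ) * r ^ k := by
          have hchoose : (k.factorial : ℝ)
              = (k.choose i : ℝ) * (i.factorial : ℝ) * ((k-i).factorial : ℝ) := by
            exact_mod_cast (congrArg (Nat.cast (R := ℝ))
              (Nat.choose_mul_factorial_mul_factorial hik)).symm
          have hBne : ((1-ε)*d) ≠ 0 := ne_of_gt hB0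
          have h1ε : (1:ℝ) - ε ≠ 0 := by linarith
          have hrB : r * ((1-ε)*d) = (1+ε)*d := by rw [hr]; field_simp
          rw [← hrB, mul_pow, hchoose]
          have hBk : ((1-ε)*d)^k ≠ 0 := pow_ne_zero _ hBne
          have hfi : (i.factorial : ℝ) ≠ 0 := by positivity
          have hfki : ((k-i).factorial : ℝ) ≠ 0 := by positivity
          push_cast
          field_simp
  -- interpolation formula
  have hC0 : 0 ≤ C := le_trans (abs_nonneg _) (hC 0 (by omega))
  have hdeg' : P.degree < (#(range (k+1)) : ℕ) := by
    rw [card_range]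
    exact lt_of_le_of_lt hdeg (by exact_mod_cast lt_add_one k)
  have key : P.eval t
      = ∑ i ∈ range (k+1), P.eval (x i) * (Lagrange.basis (range (k+1)) x i).eval t := by
    conv_lhs => rw [Lagrange.eq_interpolate hinj hdeg']
    rw [Lagrange.interpolate_apply, Polynomial.eval_finset_sum]
    exact Finset.sum_congr rfl fun i _ => by rw [Polynomial.eval_mul, Polynomial.eval_C]
  calc |P.eval t|
      ≤ ∑ i ∈ range (k+1), |P.eval (x i)| * |(Lagrange.basis (range (k+1)) x i).eval t| := by
        rw [key]
        refine (Finset.abs_sum_le_sum_abs _ _).trans (le_of_eq ?_)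
        exact Finset.sum_congr rfl fun i _ => abs_mul _ _
    _ ≤ ∑ i ∈ range (k+1), C * ((k.choose i : ℝ) * r ^ k) := by
        refine Finset.sum_le_sum fun i hi => ?_
        have hik : i ≤ k := by rw [mem_range] at hi; omega
        exact mul_le_mul (hC i hik) (basis_bd i hi) (abs_nonneg _) hC0
    _ = C * (2:ℝ)^k * r^k := by
        rw [← Finset.mul_sum, ← Finset.sum_mul, ← Nat.cast_sum, Nat.sum_range_choose]
        push_cast
        ring
    _ = C * (2 * (1 + ε) / (1 - ε)) ^ k := by
        have e : 2 * (1 + ε) / (1 - ε) = 2 * r := by rw [hr]; ring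
        rw [e, mul_pow]
        ring
end

section
/- Let k ≥ 2, ε > 0, f₀(z) = z, and let f : [-ε,ε] → ℝ be of class C^k with ‖f - f₀‖_{C^k} < η where 0 < η ≤ 1/((k+1)·2^{k+3}). Then for every integer j with 1 ≤ j ≤ 2k (assuming the iterates stay in the domain), ‖f^j - f₀‖_{C^k} < 2jη. -/
/-!
Write `f^[j+1] - id = (f^[j] - id) + (f - id) ∘ f^[j]` and induct on `j`. The only real work is
bounding derivatives of a composition `g ∘ φ` with `φ` close to the identity: from
`(g ∘ φ)' = g' ∘ φ + (g' ∘ φ) · (φ - id)'` and the Leibniz rule one gets, by induction on the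
order, `‖(g ∘ φ)^{(i)}‖ ≤ M / (1 - (2ⁿ - 1) δ)` for `i ≤ n`, where `M` bounds the first `n`
derivatives of `g` and `δ` those of `φ - id`. With `φ = f^[j]` and `δ = 2jη`, the smallness of
`η` makes this factor smaller than `2`, so each step adds less than `2η`.
-/

open Set Finset

theorem inv_one_sub_mul_one_add_le {a δ : ℝ} (ha : 1 ≤ a) (hδ : 0 ≤ δ)
    (h : (2 * a - 1) * δ < 1) :
    (1 - (a - 1) * δ)⁻¹ * (1 + a * δ) ≤ (1 - (2 * a - 1) * δ)⁻¹ := by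
  have h₁ : 0 < 1 - (2 * a - 1) * δ := by linarith
  have h₂ : 0 < 1 - (a - 1) * δ := by nlinarith
  rw [← div_eq_inv_mul, div_le_iff₀ h₂, inv_mul_eq_div, le_div_iff₀ h₁]
  have ha' : 0 ≤ a * (2 * a - 1) := mul_nonneg (by linarith) (by linarith)
  nlinarith [mul_nonneg (mul_nonneg hδ hδ) ha']

theorem two_pow_sub_one_mul_lt_half {k j : ℕ} {η : ℝ} (hη0 : 0 < η)
    (hη : η * ((k + 1) * 2 ^ (k + 3)) ≤ 1) (hj : j < 2 * k) :
    (2 ^ k - 1) * (2 * j * η) < 1 / 2 := by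
  have ht : 0 < (2 : ℝ) ^ k * η := by positivity
  have h8 : 8 * (k + 1) * (2 ^ k * η) ≤ 1 := by
    rw [pow_add] at hη
    linarith
  have hjk : (j : ℝ) + 1 ≤ 2 * k := by exact_mod_cast hj
  nlinarith [mul_le_mul_of_nonneg_left hjk ht.le,
    mul_nonneg (Nat.cast_nonneg j : (0 : ℝ) ≤ j) hη0.le]

section

variable {𝕜 : Type*} [NontriviallyNormedField 𝕜]

theorem ContDiffOn.iterate {E : Type*} [NormedAddCommGroup E] [NormedSpace 𝕜 E]
    {n : WithTop ℕ∞} {f : E → E} {s : Set E} (hf : ContDiffOn 𝕜 n f s) (hmaps : MapsTo f s s) :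
    ∀ j : ℕ, ContDiffOn 𝕜 n f^[j] s
  | 0 => contDiffOn_id
  | j + 1 => (hf.iterate hmaps j).comp hf hmaps

variable {s : Set 𝕜}

theorem derivWithin_comp_eq_add_mul_derivWithin_sub_id {g φ : 𝕜 → 𝕜} {x : 𝕜}
    (hs : UniqueDiffWithinAt 𝕜 s x) (hg : DifferentiableWithinAt 𝕜 g s (φ x))
    (hφ : DifferentiableWithinAt 𝕜 φ s x) (hmaps : MapsTo φ s s) :
    derivWithin (g ∘ φ) s x =
      derivWithin g s (φ x) + derivWithin g s (φ x) * derivWithin (fun z => φ z - z) s x := by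
  rw [derivWithin_comp x hg hφ hmaps, derivWithin_fun_sub hφ differentiableWithinAt_fun_id,
    derivWithin_id' _ _ hs]
  ring

theorem norm_iteratedDerivWithin_mul_le_two_pow {u v : 𝕜 → 𝕜} {n : ℕ} {x : 𝕜} {A B : ℝ}
    (hs : UniqueDiffOn 𝕜 s) (hx : x ∈ s) (hu : ContDiffOn 𝕜 n u s) (hv : ContDiffOn 𝕜 n v s)
    (hA : ∀ i ≤ n, ‖iteratedDerivWithin i u s x‖ ≤ A)
    (hB : ∀ i ≤ n, ‖iteratedDerivWithin i v s x‖ ≤ B) :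
    ‖iteratedDerivWithin n (fun y => u y * v y) s x‖ ≤ 2 ^ n * (A * B) := by
  have hA0 : 0 ≤ A := (norm_nonneg _).trans (hA 0 n.zero_le)
  rw [← norm_iteratedFDerivWithin_eq_norm_iteratedDerivWithin]
  calc _ ≤ ∑ i ∈ range (n + 1), (n.choose i : ℝ) * ‖iteratedFDerivWithin 𝕜 i u s x‖ *
          ‖iteratedFDerivWithin 𝕜 (n - i) v s x‖ :=
        norm_iteratedFDerivWithin_mul_le hu hv hs hx le_rfl
    _ ≤ ∑ i ∈ range (n + 1), (n.choose i : ℝ) * (A * B) := by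
        refine sum_le_sum fun i hi => ?_
        have hin : i ≤ n := Nat.lt_succ_iff.mp (mem_range.mp hi)
        simp only [norm_iteratedFDerivWithin_eq_norm_iteratedDerivWithin, mul_assoc]
        gcongr
        exacts [hA i hin, hB (n - i) (n.sub_le i)]
    _ = 2 ^ n * (A * B) := by
        rw [← sum_mul, ← Nat.cast_sum, Nat.sum_range_choose]
        push_cast
        ring

theorem norm_iteratedDerivWithin_succ_comp_le (hs : UniqueDiffOn 𝕜 s) {φ g : 𝕜 → 𝕜}
    (hmaps : MapsTo φ s s) {m : ℕ} (hφ : ContDiffOn 𝕜 (m + 1 : ℕ) φ s)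
    (hg : ContDiffOn 𝕜 (m + 1 : ℕ) g s) {x : 𝕜} (hx : x ∈ s) {A δ : ℝ}
    (hA : ∀ i ≤ m, ‖iteratedDerivWithin i (derivWithin g s ∘ φ) s x‖ ≤ A)
    (hδ : ∀ i ≤ m, ‖iteratedDerivWithin (i + 1) (fun z => φ z - z) s x‖ ≤ δ) :
    ‖iteratedDerivWithin (m + 1) (g ∘ φ) s x‖ ≤ A + 2 ^ m * (A * δ) := by
  have hsucc : ((m : WithTop ℕ∞) + 1) ≤ ((m + 1 : ℕ) : WithTop ℕ∞) := by norm_cast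
  have hg'φ : ContDiffOn 𝕜 m (derivWithin g s ∘ φ) s :=
    (hg.derivWithin hs hsucc).comp (hφ.of_le (by norm_cast; omega)) hmaps
  have hψ' : ContDiffOn 𝕜 m (derivWithin (fun z => φ z - z) s) s :=
    (hφ.sub contDiffOn_fun_id).derivWithin hs hsucc
  have hchain : EqOn (derivWithin (g ∘ φ) s)
      (fun y => (derivWithin g s ∘ φ) y + (derivWithin g s ∘ φ) y *
        derivWithin (fun z => φ z - z) s y) s := fun y hy =>
    derivWithin_comp_eq_add_mul_derivWithin_sub_id (hs y hy)
      (hg.differentiableOn (by simp) _ (hmaps hy)) (hφ.differentiableOn (by simp) y hy) hmaps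
  rw [iteratedDerivWithin_succ', iteratedDerivWithin_congr hchain hx,
    iteratedDerivWithin_fun_add hx hs (hg'φ x hx) ((hg'φ.mul hψ') x hx)]
  refine (norm_add_le _ _).trans (add_le_add (hA m le_rfl) ?_)
  refine norm_iteratedDerivWithin_mul_le_two_pow hs hx hg'φ hψ' hA fun i hi => ?_
  rw [← iteratedDerivWithin_succ']
  exact hδ i hi

theorem norm_iteratedDerivWithin_comp_le (hs : UniqueDiffOn 𝕜 s) {φ : 𝕜 → 𝕜}
    (hmaps : MapsTo φ s s) {δ : ℝ} (hδ : 0 ≤ δ) {n : ℕ} (hφ : ContDiffOn 𝕜 n φ s)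
    (hδn : (2 ^ n - 1) * δ < 1)
    (hφδ : ∀ m, 1 ≤ m → m ≤ n → ∀ x ∈ s,
      ‖iteratedDerivWithin m (fun z => φ z - z) s x‖ ≤ δ)
    {g : 𝕜 → 𝕜} {M : ℝ} (hg : ContDiffOn 𝕜 n g s)
    (hgM : ∀ i ≤ n, ∀ x ∈ s, ‖iteratedDerivWithin i g s x‖ ≤ M) :
    ∀ i ≤ n, ∀ x ∈ s, ‖iteratedDerivWithin i (g ∘ φ) s x‖ ≤ M * (1 - (2 ^ n - 1) * δ)⁻¹ := by
  induction n generalizing g with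
  | zero => simpa using fun x hx => hgM 0 le_rfl (φ x) (hmaps hx)
  | succ n ih =>
    intro i hi x hx
    have hM : 0 ≤ M := (norm_nonneg _).trans (hgM 0 (Nat.zero_le _) (φ x) (hmaps hx))
    have hpow : (1 : ℝ) ≤ 2 ^ n := one_le_pow₀ one_le_two
    have hδn' : (2 * 2 ^ n - 1) * δ < 1 := by rwa [pow_succ, mul_comm (2 ^ n : ℝ)] at hδn
    rw [pow_succ, mul_comm _ (2 : ℝ)]
    obtain _ | m := i
    · have hc : 1 ≤ (1 - (2 * 2 ^ n - 1) * δ)⁻¹ :=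
        (one_le_inv₀ (by linarith)).mpr (by nlinarith)
      simpa using (hgM 0 hi (φ x) (hmaps hx)).trans (le_mul_of_one_le_right hM hc)
    have hmn : m ≤ n := Nat.succ_le_succ_iff.mp hi
    have IH := ih (hφ.of_le (by norm_cast; omega)) (by nlinarith)
      (fun m hm1 hm x hx => hφδ m hm1 (hm.trans n.le_succ) x hx)
      (hg.derivWithin hs (by norm_cast))
      (fun i hi x hx => by
        rw [← iteratedDerivWithin_succ']
        exact hgM (i + 1) (Nat.succ_le_succ hi) x hx)
    have hstep := norm_iteratedDerivWithin_succ_comp_le hs hmaps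
      (hφ.of_le (by norm_cast)) (hg.of_le (by norm_cast)) hx
      (fun i hi => IH i (hi.trans hmn) x hx)
      (fun i hi => hφδ (i + 1) (Nat.le_add_left 1 i) (by omega) x hx)
    have h2m : (2 : ℝ) ^ m ≤ 2 ^ n := pow_le_pow_right₀ one_le_two hmn
    have hMc : 0 ≤ M * (1 - (2 ^ n - 1) * δ)⁻¹ * δ :=
      mul_nonneg (mul_nonneg hM (inv_nonneg.mpr (by nlinarith))) hδ
    calc _ ≤ M * (1 - (2 ^ n - 1) * δ)⁻¹ + 2 ^ m * (M * (1 - (2 ^ n - 1) * δ)⁻¹ * δ) := hstep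
      _ ≤ M * ((1 - (2 ^ n - 1) * δ)⁻¹ * (1 + 2 ^ n * δ)) := by nlinarith
      _ ≤ M * (1 - (2 * 2 ^ n - 1) * δ)⁻¹ :=
        mul_le_mul_of_nonneg_left (inv_one_sub_mul_one_add_le hpow hδ hδn') hM

variable {f : 𝕜 → 𝕜} {k : ℕ} {η : ℝ}

theorem norm_iteratedDerivWithin_iterate_succ_sub_id_lt (hs : UniqueDiffOn 𝕜 s)
    (hf : ContDiffOn 𝕜 k f s) (hmaps : MapsTo f s s) (hη0 : 0 < η)
    (hη : η * ((k + 1) * 2 ^ (k + 3)) ≤ 1)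
    (hclose : ∀ r ≤ k, ∀ x ∈ s, ‖iteratedDerivWithin r (fun z => f z - z) s x‖ ≤ η)
    {j : ℕ} (hj : j < 2 * k)
    (hjη : ∀ r ≤ k, ∀ x ∈ s, ‖iteratedDerivWithin r (fun z => f^[j] z - z) s x‖ ≤ 2 * j * η) :
    ∀ r ≤ k, ∀ x ∈ s,
      ‖iteratedDerivWithin r (fun z => f^[j + 1] z - z) s x‖ < 2 * (j + 1) * η := by
  have hδ0 : (0 : ℝ) ≤ 2 * j * η := by positivity
  have hsmall := two_pow_sub_one_mul_lt_half hη0 hη hj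
  have hfactor : (1 - (2 ^ k - 1) * (2 * j * η))⁻¹ < 2 := by
    rw [inv_lt_comm₀ (by linarith) two_pos]
    linarith
  have hcomp := norm_iteratedDerivWithin_comp_le hs (hmaps.iterate j) hδ0 (hf.iterate hmaps j)
    (by linarith) (fun m _ hm => hjη m hm) (hf.sub contDiffOn_fun_id) hclose
  intro r hr x hx
  have hsplit : (fun z => f^[j + 1] z - z) =
      (fun z => f^[j] z - z) + (fun z => f z - z) ∘ f^[j] := by
    funext z
    simp only [Pi.add_apply, Function.comp_apply, Function.iterate_succ_apply']
    ring
  have hrk : (r : WithTop ℕ∞) ≤ k := by exact_mod_cast hr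
  rw [hsplit, iteratedDerivWithin_add hx hs
    ((((hf.iterate hmaps j).sub contDiffOn_fun_id).of_le hrk) x hx)
    ((((hf.sub contDiffOn_fun_id).comp (hf.iterate hmaps j) (hmaps.iterate j)).of_le hrk) x hx)]
  calc _ ≤ _ := norm_add_le _ _
    _ < 2 * j * η + η * 2 := add_lt_add_of_le_of_lt (hjη r hr x hx)
          ((hcomp r hr x hx).trans_lt (mul_lt_mul_of_pos_left hfactor hη0))
    _ = 2 * (j + 1) * η := by ring

theorem norm_iteratedDerivWithin_iterate_sub_id_le (hs : UniqueDiffOn 𝕜 s)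
    (hf : ContDiffOn 𝕜 k f s) (hmaps : MapsTo f s s) (hη0 : 0 < η)
    (hη : η * ((k + 1) * 2 ^ (k + 3)) ≤ 1)
    (hclose : ∀ r ≤ k, ∀ x ∈ s, ‖iteratedDerivWithin r (fun z => f z - z) s x‖ ≤ η) :
    ∀ j ≤ 2 * k, ∀ r ≤ k, ∀ x ∈ s,
      ‖iteratedDerivWithin r (fun z => f^[j] z - z) s x‖ ≤ 2 * j * η
  | 0, _ => by simp
  | j + 1, hj => fun r hr x hx => by
    push_cast
    exact (norm_iteratedDerivWithin_iterate_succ_sub_id_lt hs hf hmaps hη0 hη hclose hj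
      (norm_iteratedDerivWithin_iterate_sub_id_le hs hf hmaps hη0 hη hclose j (by omega))
      r hr x hx).le

end

theorem stmt11_general (k : ℕ) (ε η : ℝ) (hε : 0 < ε)
    (hη0 : 0 < η) (hη : η ≤ 1 / (((k : ℝ) + 1) * 2 ^ (k + 3)))
    (f : ℝ → ℝ) (hf : ContDiffOn ℝ k f (Set.Icc (-ε) ε))
    (hmaps : Set.MapsTo f (Set.Icc (-ε) ε) (Set.Icc (-ε) ε))
    (hclose : ∀ r ≤ k, ∀ x ∈ Set.Icc (-ε) ε,
      |iteratedDerivWithin r (fun z => f z - z) (Set.Icc (-ε) ε) x| < η)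
    (j : ℕ) (hj1 : 1 ≤ j) (hj2 : j ≤ 2 * k) :
    ∀ r ≤ k, ∀ x ∈ Set.Icc (-ε) ε,
      |iteratedDerivWithin r (fun z => f^[j] z - z) (Set.Icc (-ε) ε) x| <
        2 * (j : ℝ) * η := by
  have hs : UniqueDiffOn ℝ (Icc (-ε) ε) := uniqueDiffOn_Icc (by linarith)
  have hη' : η * ((k + 1) * 2 ^ (k + 3)) ≤ 1 := (le_div_iff₀ (by positivity)).mp hη
  have hclose' : ∀ r ≤ k, ∀ x ∈ Icc (-ε) ε,
      ‖iteratedDerivWithin r (fun z => f z - z) (Icc (-ε) ε) x‖ ≤ η :=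
    fun r hr x hx => (Real.norm_eq_abs _ ▸ hclose r hr x hx).le
  obtain ⟨i, rfl⟩ : ∃ i, j = i + 1 := ⟨j - 1, by omega⟩
  intro r hr x hx
  rw [← Real.norm_eq_abs]
  push_cast
  exact norm_iteratedDerivWithin_iterate_succ_sub_id_lt hs hf hmaps hη0 hη' hclose' (by omega)
    (norm_iteratedDerivWithin_iterate_sub_id_le hs hf hmaps hη0 hη' hclose' i (by omega)) r hr x hx

theorem stmt11 (k : ℕ) (hk : 2 ≤ k) (ε η : ℝ) (hε : 0 < ε)
    (hη0 : 0 < η) (hη : η ≤ 1 / (((k : ℝ) + 1) * 2 ^ (k + 3)))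
    (f : ℝ → ℝ) (hf : ContDiffOn ℝ k f (Set.Icc (-ε) ε))
    (hmaps : Set.MapsTo f (Set.Icc (-ε) ε) (Set.Icc (-ε) ε))
    (hclose : ∀ r ≤ k, ∀ x ∈ Set.Icc (-ε) ε,
      |iteratedDerivWithin r (fun z => f z - z) (Set.Icc (-ε) ε) x| < η)
    (j : ℕ) (hj1 : 1 ≤ j) (hj2 : j ≤ 2 * k) :
    ∀ r ≤ k, ∀ x ∈ Set.Icc (-ε) ε,
      |iteratedDerivWithin r (fun z => f^[j] z - z) (Set.Icc (-ε) ε) x| <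
        2 * (j : ℝ) * η :=
  stmt11_general k ε η hε hη0 hη f hf hmaps hclose j hj1 hj2
end

section
/- Let k ≥ 2, ε > 0, and f : [-ε,ε] → ℝ a C^k diffeomorphism onto its image with ‖f - id‖_{C^k} < η, where 0 < η < 1/((k+1)·2^{k+3}). Then the inverse f^{-1} satisfies ‖f^{-1} - id‖_{C^k} < η + (2^{k+2}(k+1)/k)·η² ≤ (1 + 1/(2k))·η < 2η on its domain. -/
/-!
Write `h = g - id` and `G r = h⁽ʳ⁾ ∘ f`. Since `g ∘ f = id` we have `G 0 = -(f - id)`, and the chain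
rule gives `G (r + 1) = (f')⁻¹ * (G r)'`. As `f' = 1 + (f - id)'` is `η`-close to `1` in `C^(k-1)`,
its reciprocal is at most `1 + 2η` with derivatives at most `2η`. Leibniz's rule applied to the
recursion then bounds, by induction on `r`, all derivatives of order `j ≤ k - r` of `G r` by
`η + (2^(k+2) - 2^(k+2-r)) η²`; the case `j = 0` is the estimate for `g - id`.
-/

open Set

section IteratedDerivWithin

variable {s : Set ℝ} {u v : ℝ → ℝ} {n : ℕ} {x : ℝ}

theorem abs_iteratedDerivWithin_mul_le (hu : ContDiffOn ℝ n u s) (hv : ContDiffOn ℝ n v s)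
    (hs : UniqueDiffOn ℝ s) (hx : x ∈ s) :
    |iteratedDerivWithin n (fun y => u y * v y) s x| ≤
      ∑ i ∈ Finset.range (n + 1), (n.choose i : ℝ) * |iteratedDerivWithin i u s x| *
        |iteratedDerivWithin (n - i) v s x| := by
  simpa only [norm_iteratedFDerivWithin_eq_norm_iteratedDerivWithin, Real.norm_eq_abs] using
    norm_iteratedFDerivWithin_mul_le hu hv hs hx le_rfl

theorem abs_iteratedDerivWithin_mul_le_of_le (hu : ContDiffOn ℝ n u s)
    (hv : ContDiffOn ℝ n v s) (hs : UniqueDiffOn ℝ s) (hx : x ∈ s) {a₀ a b : ℝ}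
    (hu₀ : |u x| ≤ a₀) (hu' : ∀ i, 1 ≤ i → i ≤ n → |iteratedDerivWithin i u s x| ≤ a)
    (hv' : ∀ i ≤ n, |iteratedDerivWithin i v s x| ≤ b) :
    |iteratedDerivWithin n (fun y => u y * v y) s x| ≤ (a₀ + (2 ^ n - 1) * a) * b := by
  have hchoose : ∑ i ∈ Finset.range n, (n.choose (i + 1) : ℝ) = 2 ^ n - 1 := by
    have h := n.sum_range_choose
    rw [Finset.sum_range_succ', Nat.choose_zero_right] at h
    rw [eq_sub_iff_add_eq]
    exact_mod_cast h
  have hfirst : (n.choose 0 : ℝ) * |iteratedDerivWithin 0 u s x| *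
      |iteratedDerivWithin (n - 0) v s x| ≤ a₀ * b := by
    simpa using mul_le_mul hu₀ (hv' n le_rfl) (abs_nonneg _) ((abs_nonneg _).trans hu₀)
  have hrest : ∀ i ∈ Finset.range n, (n.choose (i + 1) : ℝ) *
      |iteratedDerivWithin (i + 1) u s x| * |iteratedDerivWithin (n - (i + 1)) v s x| ≤
        n.choose (i + 1) * a * b := by
    intro i hi
    have hi := Finset.mem_range.1 hi
    have hui := hu' (i + 1) (by omega) (by omega)
    simp only [mul_assoc]
    refine mul_le_mul_of_nonneg_left ?_ (Nat.cast_nonneg _)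
    exact mul_le_mul hui (hv' (n - (i + 1)) (by omega)) (abs_nonneg _) ((abs_nonneg _).trans hui)
  calc |iteratedDerivWithin n (fun y => u y * v y) s x|
      ≤ ∑ i ∈ Finset.range (n + 1), (n.choose i : ℝ) * |iteratedDerivWithin i u s x| *
          |iteratedDerivWithin (n - i) v s x| := abs_iteratedDerivWithin_mul_le hu hv hs hx
    _ ≤ ∑ i ∈ Finset.range n, (n.choose (i + 1) : ℝ) * a * b + a₀ * b := by
        rw [Finset.sum_range_succ']
        exact add_le_add (Finset.sum_le_sum hrest) hfirst
    _ = (a₀ + (2 ^ n - 1) * a) * b := by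
        rw [← Finset.sum_mul, ← Finset.sum_mul, hchoose]
        ring

theorem abs_inv_le_of_abs_sub_one_le {v η : ℝ} (hv : |v - 1| ≤ η) (hη : η ≤ 1 / 2) :
    |v⁻¹| ≤ 1 + 2 * η := by
  have hη0 : 0 ≤ η := (abs_nonneg _).trans hv
  have hv1 : 1 - η ≤ v := by linarith [neg_abs_le (v - 1)]
  have hvpos : 0 < v := by linarith
  rw [abs_of_pos (inv_pos.2 hvpos), inv_le_iff_one_le_mul₀ hvpos]
  nlinarith

theorem abs_iteratedDerivWithin_inv_le (hs : UniqueDiffOn ℝ s) (hv : ContDiffOn ℝ n v s)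
    {η : ℝ} (hnη : 2 ^ n * η ≤ 1 / 4)
    (hv' : ∀ i ≤ n, ∀ y ∈ s, |iteratedDerivWithin i (fun y => v y - 1) s y| ≤ η) :
    ∀ i, 1 ≤ i → i ≤ n → ∀ x ∈ s, |iteratedDerivWithin i (fun y => (v y)⁻¹) s x| ≤ 2 * η := by
  intro i hi1 hin x hx
  have hv₀ : ∀ y ∈ s, |v y - 1| ≤ η := fun y hy => by
    simpa using hv' 0 n.zero_le y hy
  have hη0 : 0 ≤ η := (abs_nonneg _).trans (hv₀ x hx)
  have hη : η ≤ 1 / 4 := by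
    nlinarith [one_le_pow₀ (M₀ := ℝ) (a := 2) one_le_two (n := n)]
  have hvne : ∀ y ∈ s, v y ≠ 0 := fun y hy hvy => by
    have := hv₀ y hy
    rw [hvy, zero_sub, abs_neg, abs_one] at this
    linarith
  have hinv : ContDiffOn ℝ n (fun y => (v y)⁻¹) s := hv.inv hvne
  have hsub : ContDiffOn ℝ n (fun y => v y - 1) s := hv.sub contDiffOn_const
  -- By Leibniz, `v⁻¹ = 1 - v⁻¹ (v - 1)` bounds `(v⁻¹)⁽ⁱ⁾` by lower derivatives of `v⁻¹` plus
  -- `η |(v⁻¹)⁽ⁱ⁾|`, and the latter term is absorbed.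
  have hfix : EqOn (fun y => (v y)⁻¹) (fun y => 1 - (v y)⁻¹ * (v y - 1)) s := fun y hy => by
    field_simp [hvne y hy]
    ring
  induction i using Nat.strong_induction_on with
  | _ i IH =>
    set A := |iteratedDerivWithin i (fun y => (v y)⁻¹) s x| with hAdef
    have hA : A ≤ (1 + 2 * η + (2 ^ i - 1) * max (2 * η) A) * η := by
      have hi : (i : WithTop ℕ∞) ≤ n := by exact_mod_cast hin
      have heq : iteratedDerivWithin i (fun y => (v y)⁻¹) s x =
          -iteratedDerivWithin i (fun y => (v y)⁻¹ * (v y - 1)) s x := by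
        rw [iteratedDerivWithin_congr hfix hx, iteratedDerivWithin_const_sub hi1,
          iteratedDerivWithin_fun_neg]
      calc A = |iteratedDerivWithin i (fun y => (v y)⁻¹ * (v y - 1)) s x| := by
            rw [hAdef, heq, abs_neg]
        _ ≤ _ := abs_iteratedDerivWithin_mul_le_of_le (hinv.of_le hi) (hsub.of_le hi) hs hx
            (abs_inv_le_of_abs_sub_one_le (hv₀ x hx) (by linarith)) (fun m hm1 hmi => ?_)
            (fun m hm => hv' m (by omega) x hx)
      rcases hmi.lt_or_eq with hlt | rfl
      · exact (IH m hlt hm1 (by omega)).trans (le_max_left _ _)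
      · exact le_max_right _ _
    have h2i : (2 : ℝ) ^ i * η ≤ 1 / 4 :=
      le_trans (mul_le_mul_of_nonneg_right (pow_le_pow_right₀ one_le_two hin) hη0) hnη
    rcases max_cases (2 * η) A with ⟨hmax, hle⟩ | ⟨hmax, -⟩
    · exact hle
    · rw [hmax] at hA
      nlinarith [mul_le_mul_of_nonneg_left h2i (abs_nonneg _ : 0 ≤ A)]

end IteratedDerivWithin

theorem uniqueDiffOn_image_Icc {f : ℝ → ℝ} {a b : ℝ} (hab : a < b)
    (hf : ContinuousOn f (Icc a b)) (hfab : f a ≠ f b) : UniqueDiffOn ℝ (f '' Icc a b) := by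
  have ha := mem_image_of_mem f (left_mem_Icc.2 hab.le)
  have hb := mem_image_of_mem f (right_mem_Icc.2 hab.le)
  rw [hf.image_Icc hab.le] at ha hb ⊢
  refine uniqueDiffOn_Icc (lt_of_le_of_ne (ha.1.trans ha.2) fun h => hfab ?_)
  rw [← h] at ha hb
  exact (le_antisymm ha.2 ha.1).trans (le_antisymm hb.2 hb.1).symm

theorem eqOn_iteratedDerivWithin_succ_comp {f h : ℝ → ℝ} {s t : Set ℝ} {k r : ℕ}
    (hh : ContDiffOn ℝ k h t) (ht : UniqueDiffOn ℝ t) (hf : DifferentiableOn ℝ f s)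
    (hf' : ∀ x ∈ s, derivWithin f s x ≠ 0) (hst : MapsTo f s t) (hr : r < k) :
    EqOn (fun x => iteratedDerivWithin (r + 1) h t (f x))
      (fun x => (derivWithin f s x)⁻¹ * derivWithin (fun x => iteratedDerivWithin r h t (f x)) s x)
      s := by
  intro x hx
  have hd : DifferentiableWithinAt ℝ (iteratedDerivWithin r h t) t (f x) :=
    hh.differentiableOn_iteratedDerivWithin (by exact_mod_cast hr) ht (f x) (hst hx)
  have hcomp := derivWithin_comp x hd (hf x hx) hst
  simp only [Function.comp_def] at hcomp
  simp only [hcomp, iteratedDerivWithin_succ]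
  field_simp [hf' x hx]

section Pullback

variable {s : Set ℝ} {q : ℝ → ℝ} {G : ℕ → ℝ → ℝ} {k : ℕ}

theorem contDiffOn_of_eqOn_mul_derivWithin (hs : UniqueDiffOn ℝ s)
    (hq : ContDiffOn ℝ (k - 1 : ℕ) q s) (hG₀ : ContDiffOn ℝ k (G 0) s)
    (hG : ∀ r < k, EqOn (G (r + 1)) (fun x => q x * derivWithin (G r) s x) s) :
    ∀ r ≤ k, ContDiffOn ℝ (k - r : ℕ) (G r) s := by
  intro r
  induction r with
  | zero => intro; simpa using hG₀
  | succ r IH =>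
    intro hr
    exact ((hq.of_le (by norm_cast; omega)).mul ((IH (by omega)).derivWithin hs
      (by norm_cast; omega))).congr (hG r hr)

theorem abs_iteratedDerivWithin_of_eqOn_mul_derivWithin_le (hs : UniqueDiffOn ℝ s)
    (hq : ContDiffOn ℝ (k - 1 : ℕ) q s) (hG₀ : ContDiffOn ℝ k (G 0) s)
    (hG : ∀ r < k, EqOn (G (r + 1)) (fun x => q x * derivWithin (G r) s x) s)
    {η : ℝ} (hkη : 2 ^ (k + 2) * η ≤ 1) (hq₀ : ∀ x ∈ s, |q x| ≤ 1 + 2 * η)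
    (hq' : ∀ i, 1 ≤ i → i < k → ∀ x ∈ s, |iteratedDerivWithin i q s x| ≤ 2 * η)
    (hG₀' : ∀ j ≤ k, ∀ x ∈ s, |iteratedDerivWithin j (G 0) s x| ≤ η) :
    ∀ r j, j + r ≤ k → ∀ x ∈ s,
      |iteratedDerivWithin j (G r) s x| ≤ η + (2 ^ (k + 2) - 2 ^ (k + 2 - r)) * η ^ 2 := by
  intro r
  induction r with
  | zero => intro j hj x hx; simpa using hG₀' j (by omega) x hx
  | succ r IH =>
    intro j hj x hx
    have hη : 0 ≤ η := (abs_nonneg _).trans (hG₀' 0 k.zero_le x hx)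
    have hGr := contDiffOn_of_eqOn_mul_derivWithin hs hq hG₀ hG r (by omega)
    have hstep : |iteratedDerivWithin j (G (r + 1)) s x| ≤
        (1 + 2 * η + (2 ^ j - 1) * (2 * η)) *
          (η + (2 ^ (k + 2) - 2 ^ (k + 2 - r)) * η ^ 2) := by
      rw [iteratedDerivWithin_congr (hG r (by omega)) hx]
      refine abs_iteratedDerivWithin_mul_le_of_le (hq.of_le (by norm_cast; omega))
        (hGr.derivWithin hs (by norm_cast; omega)) hs hx (hq₀ x hx)
        (fun i hi1 hij => hq' i hi1 (by omega) x hx) (fun i hij => ?_)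
      rw [← iteratedDerivWithin_succ']
      exact IH (i + 1) (by omega) x hx
    have hP : (2 : ℝ) ^ j * 2 ≤ 2 ^ (k - r) := by
      rw [← pow_succ]; exact pow_le_pow_right₀ one_le_two (by omega)
    have hc : (2 : ℝ) ^ (k + 2) - 2 ^ (k + 2 - (r + 1)) =
        (2 ^ (k + 2) - 2 ^ (k + 2 - r)) + 2 * 2 ^ (k - r) := by
      rw [show k + 2 - r = k - r + 2 by omega, show k + 2 - (r + 1) = k - r + 1 by omega]
      ring
    have hc₀ : (0 : ℝ) ≤ 2 ^ (k + 2) - 2 ^ (k + 2 - r) :=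
      sub_nonneg.2 (pow_le_pow_right₀ one_le_two (by omega))
    have hcη : (2 ^ (k + 2) - 2 ^ (k + 2 - r)) * η ≤ 1 := by
      nlinarith [pow_nonneg (zero_le_two (α := ℝ)) (k + 2 - r)]
    have hP₀ : (0 : ℝ) ≤ 2 ^ (k - r) := by positivity
    rw [hc]
    refine hstep.trans ?_
    generalize (2 : ℝ) ^ (k - r) = P at *
    generalize (2 : ℝ) ^ (k + 2) - 2 ^ (k + 2 - r) = c at *
    generalize (2 : ℝ) ^ j = J at *
    -- `(1 + 2Jη)(η + cη²) ≤ (1 + Pη)(η + cη²) ≤ η + (c + 2P)η²`, the last step because `cη ≤ 1`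
    nlinarith [mul_nonneg (mul_nonneg (sq_nonneg η) (sub_nonneg.2 hcη)) hP₀,
      mul_le_mul_of_nonneg_right hP (mul_nonneg hη (by positivity : 0 ≤ η + c * η ^ 2))]

end Pullback

theorem abs_iteratedDerivWithin_sub_id_of_leftInvOn_le {f g : ℝ → ℝ} {s : Set ℝ} {k : ℕ}
    {η : ℝ} (hk : 1 ≤ k) (hs : UniqueDiffOn ℝ s) (ht : UniqueDiffOn ℝ (f '' s))
    (hf : ContDiffOn ℝ k f s) (hg : ContDiffOn ℝ k g (f '' s)) (hgf : ∀ x ∈ s, g (f x) = x)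
    (hkη : 2 ^ (k + 2) * η ≤ 1)
    (hclose : ∀ r ≤ k, ∀ x ∈ s, |iteratedDerivWithin r (fun z => f z - z) s x| ≤ η) :
    ∀ r ≤ k, ∀ y ∈ f '' s, |iteratedDerivWithin r (fun z => g z - z) (f '' s) y| ≤
      η + (2 ^ (k + 2) - 2 ^ (k + 2 - r)) * η ^ 2 := by
  rintro r hr _ ⟨x₀, hx₀, rfl⟩
  have hη : 0 ≤ η := (abs_nonneg _).trans (hclose 0 k.zero_le x₀ hx₀)
  have hpow : (2 : ℝ) ^ (k + 2) = 2 ^ (k - 1) * 8 := by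
    rw [show k + 2 = k - 1 + 3 by omega, pow_add]; norm_num
  have hη' : η ≤ 1 / 4 := by nlinarith [one_le_pow₀ (M₀ := ℝ) one_le_two (n := k - 1)]
  have hf' : ContDiffOn ℝ (k - 1 : ℕ) (derivWithin f s) s :=
    hf.derivWithin hs (by norm_cast; omega)
  have hf'₁ : ∀ i ≤ k - 1, ∀ x ∈ s,
      |iteratedDerivWithin i (fun y => derivWithin f s y - 1) s x| ≤ η := by
    intro i hi x hx
    have hderiv : EqOn (fun y => derivWithin f s y - 1) (derivWithin (fun z => f z - z) s) s :=
      fun y hy => by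
        rw [derivWithin_fun_sub ((hf.differentiableOn (by norm_cast; omega)) y hy)
          differentiableWithinAt_fun_id, derivWithin_id' y s (hs y hy)]
    rw [iteratedDerivWithin_congr hderiv hx, ← iteratedDerivWithin_succ']
    exact hclose (i + 1) (by omega) x hx
  have hf'₀ : ∀ x ∈ s, |derivWithin f s x - 1| ≤ η := fun x hx => by
    simpa using hf'₁ 0 (Nat.zero_le _) x hx
  have hf'ne : ∀ x ∈ s, derivWithin f s x ≠ 0 := fun x hx h => by
    have := hf'₀ x hx
    rw [h, zero_sub, abs_neg, abs_one] at this
    linarith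
  have hG₀ : EqOn (fun x => iteratedDerivWithin 0 (fun z => g z - z) (f '' s) (f x))
      (fun x => -(f x - x)) s := fun x hx => by
    simp [hgf x hx]
  refine abs_iteratedDerivWithin_of_eqOn_mul_derivWithin_le
    (G := fun r x => iteratedDerivWithin r (fun z => g z - z) (f '' s) (f x)) hs
    (hf'.inv hf'ne) ((hf.sub contDiffOn_id).neg.congr hG₀)
    (fun r hr => eqOn_iteratedDerivWithin_succ_comp (hg.sub contDiffOn_id) ht
      (hf.differentiableOn (by norm_cast; omega)) hf'ne (mapsTo_image f s) hr)
    hkη (fun x hx => abs_inv_le_of_abs_sub_one_le (hf'₀ x hx) (by linarith))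
    (fun i hi₁ hik => abs_iteratedDerivWithin_inv_le hs hf' ?_ hf'₁ i hi₁ (by omega))
    (fun j hj x hx => ?_) r 0 (by omega) x₀ hx₀
  · nlinarith
  · rw [iteratedDerivWithin_congr hG₀ hx, iteratedDerivWithin_fun_neg, abs_neg]
    exact hclose j hj x hx

theorem stmt12 (k : ℕ) (hk : 2 ≤ k) (ε η : ℝ) (hε : 0 < ε)
    (hη0 : 0 < η) (hη : η < 1 / (((k : ℝ) + 1) * 2 ^ (k + 3)))
    (f g : ℝ → ℝ) (hf : ContDiffOn ℝ k f (Set.Icc (-ε) ε))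
    (hinj : Set.InjOn f (Set.Icc (-ε) ε))
    (hg : ContDiffOn ℝ k g (f '' Set.Icc (-ε) ε))
    (hgf : ∀ x ∈ Set.Icc (-ε) ε, g (f x) = x)
    (hclose : ∀ r ≤ k, ∀ x ∈ Set.Icc (-ε) ε,
      |iteratedDerivWithin r (fun z => f z - z) (Set.Icc (-ε) ε) x| < η) :
    (∀ r ≤ k, ∀ y ∈ f '' Set.Icc (-ε) ε,
        |iteratedDerivWithin r (fun z => g z - z) (f '' Set.Icc (-ε) ε) y| <
          η + 2 ^ (k + 2) * ((k : ℝ) + 1) / k * η ^ 2) ∧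
      η + 2 ^ (k + 2) * ((k : ℝ) + 1) / k * η ^ 2 ≤ (1 + 1 / (2 * (k : ℝ))) * η ∧
      (1 + 1 / (2 * (k : ℝ))) * η < 2 * η := by
  have hε' : -ε < ε := by linarith
  have hk' : (2 : ℝ) ≤ k := by exact_mod_cast hk
  have hkη : 2 ^ (k + 2) * η * (2 * ((k : ℝ) + 1)) < 1 := by
    rw [lt_div_iff₀ (by positivity)] at hη
    linear_combination hη
  have h2 : (0 : ℝ) < 2 ^ (k + 2) := by positivity
  have hkη' : 2 ^ (k + 2) * η ≤ 1 := by nlinarith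
  have hbound := abs_iteratedDerivWithin_sub_id_of_leftInvOn_le (by omega)
    (uniqueDiffOn_Icc hε') (uniqueDiffOn_image_Icc hε' hf.continuousOn
      (hinj.ne (left_mem_Icc.2 hε'.le) (right_mem_Icc.2 hε'.le) hε'.ne))
    hf hg hgf hkη' fun r hr x hx => (hclose r hr x hx).le
  have hconst : (2 : ℝ) ^ (k + 2) ≤ 2 ^ (k + 2) * ((k : ℝ) + 1) / k := by
    rw [le_div_iff₀ (by positivity)]; nlinarith
  refine ⟨fun r hr y hy => (hbound r hr y hy).trans_lt ?_, ?_, ?_⟩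
  · have : (0 : ℝ) < 2 ^ (k + 2 - r) := by positivity
    have := pow_pos hη0 2
    nlinarith
  · have : 2 ^ (k + 2) * ((k : ℝ) + 1) / k * η ^ 2 =
        2 ^ (k + 2) * η * (2 * ((k : ℝ) + 1)) * (η / (2 * k)) := by
      field_simp
    rw [this]
    calc η + 2 ^ (k + 2) * η * (2 * ((k : ℝ) + 1)) * (η / (2 * k))
        ≤ η + 1 * (η / (2 * k)) := by gcongr
      _ = (1 + 1 / (2 * (k : ℝ))) * η := by ring
  · have : 1 / (2 * (k : ℝ)) < 1 := (div_lt_one (by positivity)).2 (by linarith)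
    nlinarith
end

section
/- Let k ≥ 2 and let (z_j)_{0≤j≤k} be an increasing kη-quasi-arithmetic progression with δ = z₁ - z₀ > 0 and kη < 1/4. Then for each j ∈ {0,…,k}, the Lagrange weight u_j = ∏_{i≠j} 1/(z_i - z_j) satisfies |u_j| ≤ (1-kη)^{-k} δ^{-k} / (j!(k-j)!) < (2/k!)·C(k,j)·δ^{-k}, where C(k,j) is the binomial coefficient, provided (1-kη)^{-k} < 2. -/
/-!
Each factor satisfies `|z_i - z_j| ≥ (1 - kη) |i - j| δ`, and `∏_{i ≠ j} |i - j| = j! (k - j)!`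
(the factors below `j` give `j!`, those above give `(k - j)!`). The second inequality is
`k! = C(k, j) j! (k - j)!` together with `(1 - kη)^{-k} < 2`.
-/

open Finset Nat

lemma prod_range_abs_sub_eq_factorial (j : ℕ) : ∏ i ∈ range j, |(i : ℝ) - j| = j ! := by
  rw [← prod_range_reflect, ← prod_range_add_one_eq_factorial, Nat.cast_prod]
  refine prod_congr rfl fun i hi => ?_
  have hij : i < j := mem_range.mp hi
  rw [Nat.cast_sub (by omega), Nat.cast_sub (by omega), abs_sub_comm]
  push_cast
  rw [show (j : ℝ) - (j - 1 - i) = i + 1 by ring]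
  exact abs_of_nonneg (by positivity)

lemma prod_Ico_abs_sub_eq_factorial (j k : ℕ) :
    ∏ i ∈ Ico (j + 1) (k + 1), |(i : ℝ) - j| = (k - j)! := by
  rw [prod_Ico_eq_prod_range, show k + 1 - (j + 1) = k - j by omega,
    ← prod_range_add_one_eq_factorial, Nat.cast_prod]
  refine prod_congr rfl fun i _ => ?_
  push_cast
  rw [show (j : ℝ) + 1 + i - j = i + 1 by ring]
  exact abs_of_nonneg (by positivity)

lemma prod_erase_range_abs_sub_eq {j k : ℕ} (hj : j ≤ k) :
    ∏ i ∈ (range (k + 1)).erase j, |(i : ℝ) - j| = j ! * (k - j)! := by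
  have hsplit : (range (k + 1)).erase j = range j ∪ Ico (j + 1) (k + 1) := by
    ext i
    simp only [mem_erase, mem_range, mem_union, mem_Ico]
    omega
  have hdisj : Disjoint (range j) (Ico (j + 1) (k + 1)) :=
    disjoint_left.mpr fun i hi hi' => by
      simp only [mem_range, mem_Ico] at hi hi'
      omega
  rw [hsplit, prod_union hdisj, prod_range_abs_sub_eq_factorial, prod_Ico_abs_sub_eq_factorial]

lemma abs_prod_inv_sub_le {z : ℕ → ℝ} {c δ : ℝ} (hc : 0 < c) (hδ : 0 < δ) {j k : ℕ}
    (hj : j ≤ k) (hz : ∀ i ≤ k, i ≠ j → c * |(i : ℝ) - j| * δ ≤ |z i - z j|) :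
    |∏ i ∈ (range (k + 1)).erase j, (z i - z j)⁻¹| ≤
      (c ^ k)⁻¹ * (δ ^ k)⁻¹ / ((j ! : ℝ) * (k - j)!) := by
  have hcard : ((range (k + 1)).erase j).card = k := by
    rw [card_erase_of_mem (mem_range.mpr (by omega)), card_range, Nat.add_sub_cancel]
  have hterm : ∀ i ∈ (range (k + 1)).erase j,
      |(z i - z j)⁻¹| ≤ (c * |(i : ℝ) - j| * δ)⁻¹ := by
    intro i hi
    obtain ⟨hij, hik⟩ := mem_erase.mp hi
    have : (0 : ℝ) < |(i : ℝ) - j| :=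
      abs_pos.mpr (sub_ne_zero.mpr (Nat.cast_injective.ne hij))
    rw [abs_inv]
    exact inv_anti₀ (by positivity) (hz i (by simpa [Nat.lt_succ_iff] using hik) hij)
  calc |∏ i ∈ (range (k + 1)).erase j, (z i - z j)⁻¹|
      = ∏ i ∈ (range (k + 1)).erase j, |(z i - z j)⁻¹| := abs_prod _ _
    _ ≤ ∏ i ∈ (range (k + 1)).erase j, (c * |(i : ℝ) - j| * δ)⁻¹ :=
      prod_le_prod (fun _ _ => abs_nonneg _) hterm
    _ = (c ^ k)⁻¹ * (δ ^ k)⁻¹ / ((j ! : ℝ) * (k - j)!) := by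
      rw [prod_inv_distrib, prod_mul_distrib, prod_mul_distrib, prod_const, prod_const, hcard,
        prod_erase_range_abs_sub_eq hj]
      ring

lemma mul_div_factorial_mul_factorial_lt {C a : ℝ} (hC : C < 2) (ha : 0 < a) {j k : ℕ}
    (hj : j ≤ k) :
    C * a / ((j ! : ℝ) * (k - j)!) < 2 / (k ! : ℝ) * k.choose j * a := by
  have hfac : (0 : ℝ) < (j ! : ℝ) * (k - j)! := by positivity
  have hchoose : 2 / (k ! : ℝ) * k.choose j = 2 / ((j ! : ℝ) * (k - j)!) := by
    rw [Nat.cast_choose ℝ hj]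
    field_simp
  rw [hchoose, div_mul_eq_mul_div]
  gcongr

theorem stmt19_general (k : ℕ) (η δ : ℝ) (hδ : 0 < δ)
    (hkη : (k : ℝ) * η < 1 / 4)
    (z : ℕ → ℝ)
    (hqap : ∀ i ≤ k, ∀ j ≤ k, i ≠ j →
      (1 - (k : ℝ) * η) * |(i : ℝ) - j| * δ < |z i - z j| ∧
        |z i - z j| < (1 + (k : ℝ) * η) * |(i : ℝ) - j| * δ)
    (hpow : ((1 - (k : ℝ) * η) ^ k)⁻¹ < 2)
    (j : ℕ) (hj : j ≤ k) :
    |∏ i ∈ (Finset.range (k + 1)).erase j, (z i - z j)⁻¹| ≤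
        ((1 - (k : ℝ) * η) ^ k)⁻¹ * (δ ^ k)⁻¹ /
          ((j.factorial : ℝ) * (k - j).factorial) ∧
      ((1 - (k : ℝ) * η) ^ k)⁻¹ * (δ ^ k)⁻¹ /
          ((j.factorial : ℝ) * (k - j).factorial) <
        2 / (k.factorial : ℝ) * (k.choose j) * (δ ^ k)⁻¹ := by
  have hc : 0 < 1 - (k : ℝ) * η := by linarith
  exact ⟨abs_prod_inv_sub_le hc hδ hj fun i hi hij => (hqap i hi j hj hij).1.le,
    mul_div_factorial_mul_factorial_lt hpow (by positivity) hj⟩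

theorem stmt19 (k : ℕ) (hk : 2 ≤ k) (η δ : ℝ) (hδ : 0 < δ) (hη : 0 < η)
    (hkη : (k : ℝ) * η < 1 / 4)
    (z : ℕ → ℝ) (hz01 : z 1 - z 0 = δ)
    (hqap : ∀ i ≤ k, ∀ j ≤ k, i ≠ j →
      (1 - (k : ℝ) * η) * |(i : ℝ) - j| * δ < |z i - z j| ∧
        |z i - z j| < (1 + (k : ℝ) * η) * |(i : ℝ) - j| * δ)
    (hpow : ((1 - (k : ℝ) * η) ^ k)⁻¹ < 2)
    (j : ℕ) (hj : j ≤ k) :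
    |∏ i ∈ (Finset.range (k + 1)).erase j, (z i - z j)⁻¹| ≤
        ((1 - (k : ℝ) * η) ^ k)⁻¹ * (δ ^ k)⁻¹ /
          ((j.factorial : ℝ) * (k - j).factorial) ∧
      ((1 - (k : ℝ) * η) ^ k)⁻¹ * (δ ^ k)⁻¹ /
          ((j.factorial : ℝ) * (k - j).factorial) <
        2 / (k.factorial : ℝ) * (k.choose j) * (δ ^ k)⁻¹ :=
  stmt19_general k η δ hδ hkη z hqap hpow j hj
end
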